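/- arXiv:1903.04093 — 3 statements merged into one kernel-verified Lean document; each statement's English description precedes it below -/
import Mathlib

section
/- Let φ : ℂ^{n−1} → ℂ be holomorphic at z₀ = x₀ + i y₀ (x₀, y₀ ∈ ℝ^{n−1}), and write φ(x+iy) = φ₁(x,y) + i φ₂(x,y) with φ₁, φ₂ real-valued. Then for all s, t ∈ ℝ, the absolute value of the determinant of the 2(n−1) × 2(n−1) real Hessian matrix of the function (x,y) ↦ s φ₁(x,y) + t φ₂(x,y) at (x₀,y₀) equals (s² + t²)^{n−1} · |det Hφ(z₀)|². -/
noncomputable section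

/-- The complex Hessian `Hφ(z) = [∂_{z_i} ∂_{z_j} φ (z)]`. -/
def cHessian {d : ℕ} (φ : (Fin d → ℂ) → ℂ) (z : Fin d → ℂ) :
    Matrix (Fin d) (Fin d) ℂ :=
  Matrix.of fun i j =>
    fderiv ℂ (fun u => fderiv ℂ φ u (Pi.single j 1)) z (Pi.single i 1)

/-- Identification of `(x, y) ∈ ℝ^d × ℝ^d` with `x + i y ∈ ℂ^d`. -/
def toC {d : ℕ} (p : (Fin d → ℝ) × (Fin d → ℝ)) : Fin d → ℂ :=
  fun l => (p.1 l : ℂ) + (p.2 l : ℂ) * Complex.I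

/-- Standard basis vectors of `ℝ^d × ℝ^d`, the `x`-directions indexed by
`Sum.inl` and the `y`-directions by `Sum.inr`. -/
def stdBasis {d : ℕ} : (Fin d ⊕ Fin d) → (Fin d → ℝ) × (Fin d → ℝ)
  | Sum.inl i => (Pi.single i 1, 0)
  | Sum.inr i => (0, Pi.single i 1)

/-- The real Hessian of `g : ℝ^d × ℝ^d → ℝ` at a point, as a
`2d × 2d` matrix in the variables `(x_1, …, x_d, y_1, …, y_d)`. -/
def realHessian {d : ℕ} (g : (Fin d → ℝ) × (Fin d → ℝ) → ℝ)
    (p : (Fin d → ℝ) × (Fin d → ℝ)) : Matrix (Fin d ⊕ Fin d) (Fin d ⊕ Fin d) ℝ :=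
  Matrix.of fun a b =>
    fderiv ℝ (fun q => fderiv ℝ g q (stdBasis b)) p (stdBasis a)

/-! With `c = s - i t` one has `s φ₁ + t φ₂ = Re (c φ)`. For a holomorphic `h`, the
Cauchy–Riemann relation `∂_y = i ∂_x` turns the real Hessian of `Re h` in the variables `(x, y)`
into the block matrix `[[Re H, -Im H], [-Im H, -Re H]]`, `H` the complex Hessian of `h`. Up to
the sign of its lower rows this is the realification `[[A, -B], [B, A]]` of `H = A + i B`, and
conjugating with the unimodular matrices `[[1, 0], [±i, 1]]` makes it block triangular with
diagonal `A + i B`, `A - i B`, so its determinant is `det H · conj (det H) = |det H|²`. Finally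
`det (c Hφ) = c^d det Hφ` and `|c|² = s² + t²`. -/

open Complex Filter Topology

namespace Matrix

variable {n : Type*} [Fintype n] [DecidableEq n]

theorem det_fromBlocks_neg_eq_det_mul_det {R : Type*} [CommRing R] {i : R} (hi : i * i = -1)
    (A B : Matrix n n R) :
    (fromBlocks A (-B) B A).det = (A + i • B).det * (A - i • B).det := by
  have hconj : fromBlocks 1 0 (i • 1) 1 * fromBlocks A (-B) B A * fromBlocks 1 0 (-i • 1) 1
      = fromBlocks (A + i • B) (-B) 0 (A - i • B) := by
    simp only [fromBlocks_multiply, Matrix.one_mul, Matrix.mul_one, Matrix.zero_mul,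
      Matrix.mul_zero, Matrix.smul_mul, Matrix.mul_smul, add_zero, zero_add,
      Matrix.mul_neg, smul_neg, neg_smul]
    congr 1
    · module
    · linear_combination (norm := module) hi • B
    · module
  have hunit (c : R) : (fromBlocks (1 : Matrix n n R) 0 (c • 1) (1 : Matrix n n R)).det = 1 := by
    rw [det_fromBlocks_zero₁₂, det_one, one_mul]
  have := congrArg det hconj
  rwa [det_mul, det_mul, hunit, hunit, one_mul, mul_one, det_fromBlocks_zero₂₁] at this

theorem det_fromBlocks_re_im (H : Matrix n n ℂ) :
    (fromBlocks (H.map re) (-H.map im) (H.map im) (H.map re)).det = normSq H.det := by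
  apply ofReal_injective
  have hre_im : (H.map re).map ofRealHom + I • (H.map im).map ofRealHom = H := by
    ext k l
    simp [mul_comm I, re_add_im]
  have hconj :
      (H.map re).map ofRealHom - I • (H.map im).map ofRealHom = H.map (starRingEnd ℂ) := by
    ext k l
    apply Complex.ext <;> simp
  rw [← ofRealHom_eq_coe, ofRealHom.map_det, ofRealHom.mapMatrix_apply, fromBlocks_map,
    Matrix.map_neg, det_fromBlocks_neg_eq_det_mul_det I_mul_I, hre_im, hconj,
    ← RingHom.mapMatrix_apply, ← RingHom.map_det, mul_conj]
  exact map_neg ofRealHom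

theorem abs_det_fromBlocks_re_im (H : Matrix n n ℂ) :
    |(fromBlocks (H.map re) (-H.map im) (-H.map im) (-H.map re)).det| = ‖H.det‖ ^ 2 := by
  have hflip : fromBlocks (H.map re) (-H.map im) (-H.map im) (-H.map re)
      = fromBlocks 1 0 0 (-1) * fromBlocks (H.map re) (-H.map im) (H.map im) (H.map re) := by
    simp [fromBlocks_multiply]
  rw [hflip, det_mul, det_fromBlocks_zero₁₂, det_fromBlocks_re_im]
  simp [abs_of_nonneg, normSq_eq_norm_sq, det_neg]

end Matrix

section

variable {E F : Type*} [NormedAddCommGroup E] [NormedSpace ℝ E] [NormedAddCommGroup F]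
  [NormedSpace ℂ F] (L : E →L[ℝ] F)

theorem fderiv_re_comp_clm_apply {h : F → ℂ} {p : E} (hh : DifferentiableAt ℂ h (L p))
    (v : E) : fderiv ℝ (fun q => (h (L q)).re) p v = (fderiv ℂ h (L p) (L v)).re :=
  DFunLike.congr_fun
    (reCLM.hasFDerivAt.comp p ((hh.hasFDerivAt.restrictScalars ℝ).comp p L.hasFDerivAt)).fderiv v

theorem fderiv_fderiv_re_comp_clm_apply {h : F → ℂ} {p : E} (hh : ContDiffAt ℂ 2 h (L p))
    (u v : E) :
    fderiv ℝ (fun q => fderiv ℝ (fun q' => (h (L q')).re) q v) p u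
      = (fderiv ℂ (fderiv ℂ h) (L p) (L u) (L v)).re := by
  have hnear : ∀ᶠ q in 𝓝 p, DifferentiableAt ℂ h (L q) :=
    L.continuous.continuousAt.eventually
      ((hh.eventually (by norm_num)).mono fun w hw => hw.differentiableAt (by norm_num))
  have hfirst : (fun q => fderiv ℝ (fun q' => (h (L q')).re) q v)
      =ᶠ[𝓝 p] fun q => ((fun w => fderiv ℂ h w (L v)) (L q)).re :=
    hnear.mono fun q hq => fderiv_re_comp_clm_apply L hq v
  have hD : DifferentiableAt ℂ (fderiv ℂ h) (L p) :=
    (hh.fderiv_right_succ (n := 1)).differentiableAt_one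
  rw [hfirst.fderiv_eq, fderiv_re_comp_clm_apply L (hD.clm_apply (differentiableAt_const _)),
    fderiv_clm_apply hD (differentiableAt_const _)]
  simp

end

section

variable {d : ℕ}

theorem cHessian_apply {h : (Fin d → ℂ) → ℂ} {z : Fin d → ℂ}
    (hh : DifferentiableAt ℂ (fderiv ℂ h) z) (i j : Fin d) :
    cHessian h z i j = fderiv ℂ (fderiv ℂ h) z (Pi.single i 1) (Pi.single j 1) := by
  rw [cHessian, Matrix.of_apply, fderiv_clm_apply hh (differentiableAt_const _)]
  simp

theorem cHessian_const_smul (c : ℂ) (φ : (Fin d → ℂ) → ℂ) (z : Fin d → ℂ) :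
    cHessian (c • φ) z = c • cHessian φ z := by
  ext i j
  have hfirst : (fun u => fderiv ℂ (c • φ) u (Pi.single j 1))
      = c • fun u => fderiv ℂ φ u (Pi.single j 1) := by
    rw [fderiv_const_smul_field]
    rfl
  simp only [cHessian, Matrix.smul_apply, Matrix.of_apply]
  rw [hfirst, fderiv_const_smul_field]
  rfl

def toCLM : ((Fin d → ℝ) × (Fin d → ℝ)) →L[ℝ] (Fin d → ℂ) :=
  LinearMap.toContinuousLinearMap
    { toFun := toC
      map_add' := fun p q => by
        funext l
        simp only [toC, Prod.fst_add, Prod.snd_add, Pi.add_apply, ofReal_add]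
        ring
      map_smul' := fun c p => by
        funext l
        simp only [toC, Prod.smul_fst, Prod.smul_snd, Pi.smul_apply, smul_eq_mul,
          RingHom.id_apply, real_smul, ofReal_mul]
        ring }

@[simp] theorem toCLM_apply (p : (Fin d → ℝ) × (Fin d → ℝ)) : toCLM p = toC p := rfl

@[simp] theorem toC_re_im (z : Fin d → ℂ) : toC (fun l => (z l).re, fun l => (z l).im) = z :=
  funext fun l => re_add_im (z l)

@[simp] theorem toC_stdBasis_inl (i : Fin d) : toC (stdBasis (Sum.inl i)) = Pi.single i 1 := by
  funext l
  rcases eq_or_ne l i with rfl | hl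
  · simp [toC, stdBasis]
  · simp [toC, stdBasis, hl]

@[simp] theorem toC_stdBasis_inr (i : Fin d) :
    toC (stdBasis (Sum.inr i)) = I • Pi.single i 1 := by
  funext l
  rcases eq_or_ne l i with rfl | hl
  · simp [toC, stdBasis]
  · simp [toC, stdBasis, hl]

theorem realHessian_re_comp_toC {h : (Fin d → ℂ) → ℂ} {z : Fin d → ℂ}
    (hh : ContDiffAt ℂ 2 h z) :
    realHessian (fun p => (h (toC p)).re) (fun l => (z l).re, fun l => (z l).im)
      = Matrix.fromBlocks ((cHessian h z).map re) (-(cHessian h z).map im)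
          (-(cHessian h z).map im) (-(cHessian h z).map re) := by
  have hD : DifferentiableAt ℂ (fderiv ℂ h) z :=
    (hh.fderiv_right_succ (n := 1)).differentiableAt_one
  ext a b
  have hentry := fderiv_fderiv_re_comp_clm_apply toCLM
    (p := (fun l => (z l).re, fun l => (z l).im)) (by simpa using hh) (stdBasis a) (stdBasis b)
  simp only [toCLM_apply, toC_re_im] at hentry
  rw [realHessian, Matrix.of_apply]
  refine hentry.trans ?_
  rcases a with i | i <;> rcases b with j | j <;> simp [cHessian_apply hD]

end

/-- Equation (2.5) of the paper: if `φ` is holomorphic at `z₀` and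
`φ = φ₁ + i φ₂`, then the determinant of the real Hessian of
`s φ₁ + t φ₂` at `z₀` has absolute value `(s² + t²)^{n-1} |det Hφ(z₀)|²`. -/
theorem real_hessian_det_of_holomorphic {d : ℕ} (φ : (Fin d → ℂ) → ℂ)
    (z₀ : Fin d → ℂ) (hφ : AnalyticAt ℂ φ z₀) (s t : ℝ) :
    |(realHessian
        (fun p => s * (φ (toC p)).re + t * (φ (toC p)).im)
        (fun l => (z₀ l).re, fun l => (z₀ l).im)).det|
      = (s ^ 2 + t ^ 2) ^ d * ‖(cHessian φ z₀).det‖ ^ 2 := by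
  set c : ℂ := s + (-t : ℝ) * I
  have hg : (fun p => s * (φ (toC p)).re + t * (φ (toC p)).im)
      = fun p => ((c • φ) (toC p)).re := by
    funext p
    simp [c]
  have hc : ‖c‖ ^ 2 = s ^ 2 + t ^ 2 := by
    rw [Complex.sq_norm, normSq_add_mul_I, neg_sq]
  rw [hg, realHessian_re_comp_toC (h := c • φ) (hφ.contDiffAt.const_smul c),
    Matrix.abs_det_fromBlocks_re_im, cHessian_const_smul, Matrix.det_smul, Fintype.card_fin,
    norm_mul, norm_pow, mul_pow, ← pow_mul, mul_comm d 2, pow_mul, hc]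
end
end

section
/- Let L_1, …, L_n : ℝ^{2n} → ℝ^{2n−2} be linear maps such that ℝ^{2n} is the direct sum ker L_1 ⊕ ker L_2 ⊕ ⋯ ⊕ ker L_n (so each kernel is 2-dimensional and together they span ℝ^{2n}). Then for every linear subspace V ⊆ ℝ^{2n}, one has (n−1) · dim V ≤ ∑_{j=1}^n dim(L_j(V)). -/
open Module Submodule

lemma finrank_finset_sup_eq_sum {ι M : Type*} [AddCommGroup M] [Module ℝ M]
    [FiniteDimensional ℝ M] {p : ι → Submodule ℝ M} (hp : iSupIndep p)
    (s : Finset ι) : finrank ℝ ↥(s.sup p) = ∑ j ∈ s, finrank ℝ ↥(p j) := by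
  classical
  induction s using Finset.induction with
  | empty => simp
  | @insert a s ha ih =>
    rw [Finset.sup_insert, Finset.sum_insert ha]
    have hdisj : p a ⊓ s.sup p = ⊥ := by
      refine ((hp a).mono_right ?_).eq_bot
      exact Finset.sup_le fun j hj => le_iSup_of_le j (le_iSup_of_le
        (by rintro rfl; exact ha hj) le_rfl)
    have h := Submodule.finrank_sup_add_finrank_inf_eq (p a) (s.sup p)
    rw [hdisj] at h
    simp only [finrank_bot, add_zero] at h
    rw [h, ih]

lemma finrank_map_add_finrank_inf_ker {M N : Type*} [AddCommGroup M] [Module ℝ M]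
    [AddCommGroup N] [Module ℝ N] [FiniteDimensional ℝ M]
    (f : M →ₗ[ℝ] N) (V : Submodule ℝ M) :
    finrank ℝ ↥(V.map f) + finrank ℝ ↥(V ⊓ LinearMap.ker f) = finrank ℝ ↥V := by
  have h := LinearMap.finrank_range_add_finrank_ker (f.domRestrict V)
  rw [LinearMap.range_domRestrict] at h
  have hk : finrank ℝ ↥(LinearMap.ker (f.domRestrict V)) =
      finrank ℝ ↥(V ⊓ LinearMap.ker f) := by
    rw [LinearMap.ker_domRestrict]
    have h2 := Submodule.finrank_map_subtype_eq V (Submodule.comap V.subtype (LinearMap.ker f))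
    rw [Submodule.map_comap_subtype] at h2
    exact h2.symm
  rw [hk] at h
  exact h

/-- Lemma 3.2 of the paper: if `ℝ^{2n} = ker L_1 ⊕ ⋯ ⊕ ker L_n` for linear
maps `L_j : ℝ^{2n} → ℝ^{2n-2}`, then for every subspace `V ⊆ ℝ^{2n}` one has
`(n − 1) dim V ≤ ∑_j dim (L_j V)`. -/
theorem dim_inequality_of_kernel_direct_sum {n : ℕ}
    (L : Fin n → ((Fin (2 * n) → ℝ) →ₗ[ℝ] (Fin (2 * n - 2) → ℝ)))
    (hker : DirectSum.IsInternal fun j => LinearMap.ker (L j))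
    (V : Submodule ℝ (Fin (2 * n) → ℝ)) :
    (n - 1) * Module.finrank ℝ V ≤
      ∑ j : Fin n, Module.finrank ℝ (V.map (L j)) := by
  classical
  have hind : iSupIndep fun j => LinearMap.ker (L j) := hker.submodule_iSupIndep
  set p : Fin n → Submodule ℝ (Fin (2 * n) → ℝ) := fun j => V ⊓ LinearMap.ker (L j) with hp
  have hpind : iSupIndep p := hind.mono fun j => inf_le_right
  have hsum : ∑ j : Fin n, finrank ℝ ↥(p j) ≤ finrank ℝ ↥V := by
    rw [← finrank_finset_sup_eq_sum hpind Finset.univ]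
    exact Submodule.finrank_mono (Finset.sup_le fun j _ => inf_le_left)
  have heq : ∀ j, finrank ℝ ↥(V.map (L j)) + finrank ℝ ↥(p j) = finrank ℝ ↥V := fun j =>
    finrank_map_add_finrank_inf_ker (L j) V
  have htot : (∑ j : Fin n, finrank ℝ ↥(V.map (L j))) + ∑ j : Fin n, finrank ℝ ↥(p j)
      = n * finrank ℝ ↥V := by
    rw [← Finset.sum_add_distrib]
    simp [heq, Finset.sum_const, Finset.card_univ]
  have : (n - 1) * finrank ℝ ↥V = n * finrank ℝ ↥V - finrank ℝ ↥V := by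
    rw [Nat.sub_mul, one_mul]
  rw [this]
  omega
end

section
/- Let 2 ≤ k ≤ n and let v_1, …, v_k ∈ ℂ^n with |v_j| = 1 for each j and |v_1 ∧ v_2 ∧ ⋯ ∧ v_k| > c for some c > 0. Then there is a constant C, depending only on n, k, c, such that for every δ > 0 and all finite collections 𝕌_{j,δ} (1 ≤ j ≤ k), where each member of 𝕌_{j,δ} is the δ-neighborhood of an affine complex line of ℂ^n with direction exactly v_j, one has ∫_{ℝ^{2n}} ∏_{j=1}^k (∑_{U_{i,j} ∈ 𝕌_{j,δ}} χ_{U_{i,j}})^{1/(k−1)} ≤ C δ^{2n} ∏_{j=1}^k (#𝕌_{j,δ})^{1/(k−1)}. -/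
/-!
The columns `I(v_j), I(i v_j)` of a matrix witnessing `|v_1 ∧ ⋯ ∧ v_k| > c` belong to a real basis
of `ℝ^{2n}`. The real-linear change of variables `φ` inverse to this basis sends `v_j` and `i v_j`
into the `j`-th complex coordinate axis, hence maps every `δ`-tube in direction `v_j` into the
set of points whose other complex coordinates lie in discs of radius `O(δ)`. For such
axis-parallel tubes the bound follows from the Loomis–Whitney inequality in the `k`
distinguished coordinates and Hölder's inequality in the remaining `n - k`; the change of
variables only costs the factor `|det φ|⁻¹`.
-/

open MeasureTheory

noncomputable section

/-- The Euclidean norm `|v| = (∑ j |v_j|²)^{1/2}` on `ℂ^m ≅ ℝ^{2m}`. -/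
def cnorm {m : ℕ} (v : Fin m → ℂ) : ℝ :=
  Real.sqrt (∑ j, ‖v j‖ ^ 2)

/-- The identification `I : ℂ^m → ℝ^{2m}`,
`I(v) = (Re v_1, Im v_1, …, Re v_m, Im v_m)`, coordinates indexed by
`(j, e) : Fin m × Fin 2`. -/
def Irl {m : ℕ} (v : Fin m → ℂ) : Fin m × Fin 2 → ℝ :=
  fun p => if p.2 = 0 then (v p.1).re else (v p.1).im

/-- The set of values `|det (I(v_1), I(i v_1), …, I(v_k), I(i v_k),
u_1, …, u_{2m-2k})|` over all orthonormal families `u` orthogonal to the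
vectors `I(v_j), I(i v_j)`.  (All elements of this set coincide, so its
supremum is the quantity `|v_1 ∧ ⋯ ∧ v_k|` of Definition 3.4.) -/
def wedgeSet {m k : ℕ} (v : Fin k → (Fin m → ℂ)) : Set ℝ :=
  { D | ∃ u : Fin m × Fin 2 → (Fin m × Fin 2 → ℝ),
      (∀ p q : Fin m × Fin 2, k ≤ (p.1 : ℕ) → k ≤ (q.1 : ℕ) →
        (∑ r, u p r * u q r) = if p = q then 1 else 0) ∧
      (∀ p : Fin m × Fin 2, k ≤ (p.1 : ℕ) → ∀ j : Fin k, ∀ e : Fin 2,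
        (∑ r, u p r *
          (if e = 0 then Irl (v j) r else Irl (Complex.I • v j) r)) = 0) ∧
      D = |(Matrix.of fun (r c : Fin m × Fin 2) =>
            if h : (c.1 : ℕ) < k then
              (if c.2 = 0 then Irl (v ⟨c.1, h⟩) r
                else Irl (Complex.I • v ⟨c.1, h⟩) r)
            else u c r).det| }

/-- `|v_1 ∧ v_2 ∧ ⋯ ∧ v_k|` of Definition 3.4. -/
def wedgeAbs {m k : ℕ} (v : Fin k → (Fin m → ℂ)) : ℝ :=
  sSup (wedgeSet v)

/-- The `δ`-neighborhood of the affine complex line `{a + λ v : λ ∈ ℂ} ⊆ ℂ^m`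
(with respect to the Euclidean distance on `ℂ^m ≅ ℝ^{2m}`). -/
def tube {m : ℕ} (a v : Fin m → ℂ) (δ : ℝ) : Set (Fin m → ℂ) :=
  { w | ∃ lam : ℂ, cnorm (fun j => w j - (a j + lam * v j)) < δ }

/-- The cube `[−1, 1]^{2m} ⊆ ℝ^{2m} ≅ ℂ^m`. -/
def unitCube (m : ℕ) : Set (Fin m → ℂ) :=
  { w | ∀ j, |(w j).re| ≤ 1 ∧ |(w j).im| ≤ 1 }

open Finset Function
open scoped ENNReal

theorem one_div_natCast_sub_one_nonneg {k : ℕ} (hk : 1 ≤ k) : 0 ≤ 1 / ((k : ℝ) - 1) :=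
  div_nonneg zero_le_one (sub_nonneg.2 (by exact_mod_cast hk))

theorem lintegral_prod_rpow_le_of_eq_const {β : Type*} [MeasurableSpace β] {ν : Measure β}
    {k : ℕ} (hk : 2 ≤ k) {G : Fin k → β → ℝ≥0∞} (hG : ∀ j, Measurable (G j)) {j₀ : Fin k}
    {c : ℝ≥0∞} (hc : ∀ t, G j₀ t = c) :
    ∫⁻ t, ∏ j, G j t ^ (1 / ((k : ℝ) - 1)) ∂ν ≤
      c ^ (1 / ((k : ℝ) - 1)) * ∏ j ∈ univ.erase j₀, (∫⁻ t, G j t ∂ν) ^ (1 / ((k : ℝ) - 1)) := by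
  have hk1 : (1 : ℝ) < k := by exact_mod_cast hk
  simp_rw [← mul_prod_erase univ _ (mem_univ j₀), hc]
  rw [lintegral_const_mul _ (Finset.measurable_prod _ fun j _ => (hG j).pow_const _)]
  gcongr
  refine ENNReal.lintegral_prod_norm_pow_le _ (fun j _ => (hG j).aemeasurable) ?_
    (fun _ _ => by positivity)
  rw [sum_const, card_erase_of_mem (mem_univ _), card_univ, Fintype.card_fin, nsmul_eq_mul,
    Nat.cast_pred (by omega)]
  field_simp [sub_ne_zero.2 hk1.ne']

theorem lintegral_prod_rpow_le_of_le {β : Type*} [MeasurableSpace β] {ν : Measure β} {k : ℕ}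
    (hk : 2 ≤ k) {H : Fin k → β → ℝ≥0∞} (hH : ∀ j, Measurable (H j)) {N : Fin k → ℝ≥0∞}
    (hHN : ∀ j t, H j t ≤ N j) {b : ℝ≥0∞} (hHb : ∀ j, ∫⁻ t, H j t ∂ν ≤ N j * b) :
    ∫⁻ t, ∏ j, H j t ^ (1 / ((k : ℝ) - 1)) ∂ν ≤ b * ∏ j, N j ^ (1 / ((k : ℝ) - 1)) := by
  set p : ℝ := 1 / ((k : ℝ) - 1)
  set q : ℝ := (k : ℝ)⁻¹
  have hk1 : (1 : ℝ) < k := by exact_mod_cast hk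
  have hp : 0 ≤ p := one_div_natCast_sub_one_nonneg (by omega)
  have hq : 0 ≤ q := by positivity
  have hpq : p * q + q = p := by
    simp only [p, q]
    field_simp [sub_ne_zero.2 hk1.ne']
    ring
  have hpoint : ∀ j t, H j t ^ p ≤ (N j ^ p * H j t) ^ q := fun j t => by
    rw [ENNReal.mul_rpow_of_nonneg _ _ hq, ← ENNReal.rpow_mul]
    calc H j t ^ p = H j t ^ (p * q) * H j t ^ q := by
          rw [← ENNReal.rpow_add_of_nonneg _ _ (by positivity) hq, hpq]
      _ ≤ _ := by gcongr; exact hHN j t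
  have hN : ∀ j, (N j ^ p * (N j * b)) ^ q = N j ^ p * b ^ q := fun j => by
    rw [← mul_assoc, ENNReal.mul_rpow_of_nonneg _ _ hq]
    congr 1
    conv_lhs => enter [1, 2]; rw [← ENNReal.rpow_one (N j)]
    rw [← ENNReal.rpow_add_of_nonneg _ _ hp zero_le_one, ← ENNReal.rpow_mul, add_mul, one_mul,
      hpq]
  calc ∫⁻ t, ∏ j, H j t ^ p ∂ν ≤ ∫⁻ t, ∏ j, (N j ^ p * H j t) ^ q ∂ν :=
        lintegral_mono fun t => prod_le_prod' fun j _ => hpoint j t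
    _ ≤ ∏ j, (∫⁻ t, N j ^ p * H j t ∂ν) ^ q :=
        ENNReal.lintegral_prod_norm_pow_le _ (fun j _ => ((hH j).const_mul _).aemeasurable)
          (by simp [q, (by positivity : (k : ℝ) ≠ 0)]) fun _ _ => hq
    _ ≤ ∏ j, (N j ^ p * (N j * b)) ^ q := by
        gcongr with j
        rw [lintegral_const_mul _ (hH j)]
        gcongr
        exact hHb j
    _ = b * ∏ j, N j ^ p := by
        rw [prod_congr rfl fun j _ => hN j, prod_mul_distrib, prod_const, card_univ,
          Fintype.card_fin, ENNReal.rpow_inv_natCast_pow (by omega), mul_comm]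

section Marginals

variable {ι : Type*} [DecidableEq ι] {π : ι → Type*} [∀ i, MeasurableSpace (π i)]
  (μ : ∀ i, Measure (π i))

theorem lmarginal_finset_sum {κ : Type*} (s : Finset κ) (T : Finset ι)
    {f : κ → (∀ i, π i) → ℝ≥0∞} (hf : ∀ j ∈ s, Measurable (f j)) :
    (∫⋯∫⁻_T, (fun y => ∑ j ∈ s, f j y) ∂μ) = ∑ j ∈ s, ∫⋯∫⁻_T, f j ∂μ := by
  ext x
  simp only [lmarginal, Finset.sum_apply]
  exact lintegral_finsetSum _ fun j hj => (hf j hj).comp measurable_updateFinset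

theorem lmarginal_prod_comp_eval [∀ i, SigmaFinite (μ i)] {A T : Finset ι} (hTA : T ⊆ A)
    {c : ∀ i, π i → ℝ≥0∞} (hc : ∀ i, Measurable (c i)) (x : ∀ i, π i) :
    (∫⋯∫⁻_T, (fun y => ∏ i ∈ A, c i (y i)) ∂μ) x =
      (∏ i ∈ T, ∫⁻ t, c i t ∂μ i) * ∏ i ∈ A \ T, c i (x i) := by
  induction T using Finset.induction generalizing x with
  | empty => simp
  | @insert i T hi ih =>
    have hiA : i ∈ A \ T := mem_sdiff.2 ⟨hTA (mem_insert_self i T), hi⟩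
    have hupdate : ∀ t, ∏ m ∈ A \ T, c m (update x i t m) =
        c i t * ∏ m ∈ A \ insert i T, c m (x m) := fun t => by
      rw [← mul_prod_erase _ _ hiA, update_self, sdiff_insert]
      exact congrArg _ (prod_congr rfl fun m hm => by rw [update_of_ne (ne_of_mem_erase hm)])
    have hmeas : Measurable fun y : ∀ i, π i => ∏ m ∈ A, c m (y m) :=
      Finset.measurable_prod _ fun m _ => (hc m).comp (measurable_pi_apply m)
    rw [lmarginal_insert _ hmeas hi]
    simp_rw [ih (insert_subset_iff.1 hTA).2, hupdate, mul_left_comm _ (c i _)]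
    rw [lintegral_mul_const'' _ (hc i).aemeasurable, prod_insert hi]
    ring

/-- The Loomis–Whitney inequality, in the marginal form that allows an induction on `s`. -/
theorem lmarginal_prod_rpow_le [∀ i, SigmaFinite (μ i)] {k : ℕ} (hk : 2 ≤ k) {e : Fin k → ι}
    (he : Injective e) {f : Fin k → (∀ i, π i) → ℝ≥0∞} (hf : ∀ j, Measurable (f j))
    (hfe : ∀ j x t, f j (update x (e j) t) = f j x) {s : Finset ι}
    (hs : ∀ i ∈ s, i ∈ Set.range e) (x : ∀ i, π i) :
    (∫⋯∫⁻_s, (fun y => ∏ j, f j y ^ (1 / ((k : ℝ) - 1))) ∂μ) x ≤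
      ∏ j, (∫⋯∫⁻_(s.erase (e j)), f j ∂μ) x ^ (1 / ((k : ℝ) - 1)) := by
  induction s using Finset.induction generalizing x with
  | empty => simp
  | @insert i s hi ih =>
    obtain ⟨j₀, rfl⟩ := hs _ (mem_insert_self _ s)
    have hF : Measurable fun y => ∏ j, f j y ^ (1 / ((k : ℝ) - 1)) :=
      Finset.measurable_prod _ fun j _ => (hf j).pow_const _
    have hconst : ∀ t, (∫⋯∫⁻_(s.erase (e j₀)), f j₀ ∂μ) (update x (e j₀) t) =
        (∫⋯∫⁻_s, f j₀ ∂μ) x := fun t => by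
      rw [erase_eq_of_notMem hi, lmarginal_update_of_notMem (hf j₀) hi]
      exact congrArg (fun g => (∫⋯∫⁻_s, g ∂μ) x) (funext fun y => hfe j₀ y t)
    rw [lmarginal_insert _ hF hi, ← mul_prod_erase univ _ (mem_univ j₀), erase_insert hi]
    calc _ ≤ ∫⁻ t, ∏ j, (∫⋯∫⁻_(s.erase (e j)), f j ∂μ) (update x (e j₀) t) ^
            (1 / ((k : ℝ) - 1)) ∂μ (e j₀) :=
          lintegral_mono fun t => ih (fun i hi' => hs i (mem_insert_of_mem hi')) _
      _ ≤ _ := lintegral_prod_rpow_le_of_eq_const hk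
          (fun j => ((hf j).lmarginal μ).comp (measurable_update x)) hconst
      _ = _ := by
          congr 1
          refine prod_congr rfl fun j hj => ?_
          have hne : e j₀ ≠ e j := he.ne (ne_of_mem_erase hj).symm
          rw [erase_insert_of_ne hne, lmarginal_insert _ (hf j)
            fun h => hi (mem_of_mem_erase h)]
          rfl

end Marginals

section Cylinders

variable {α ι : Type*} {N : ℕ}

def cylinderCount (B : Fin N → ι → Set α) (A : Finset ι) : (ι → α) → ℝ≥0∞ :=
  fun y => ∑ i, ∏ m ∈ A, (B i m).indicator 1 (y m)

theorem measurable_cylinderCount [MeasurableSpace α] {B : Fin N → ι → Set α}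
    (hB : ∀ i m, MeasurableSet (B i m)) (A : Finset ι) : Measurable (cylinderCount B A) :=
  Finset.measurable_sum _ fun i _ => Finset.measurable_prod _ fun m _ =>
    (measurable_one.indicator (hB i m)).comp (measurable_pi_apply m)

theorem cylinderCount_le (B : Fin N → ι → Set α) (A : Finset ι) (y : ι → α) :
    cylinderCount B A y ≤ N := by
  have hle : ∀ i, ∏ m ∈ A, (B i m).indicator (1 : α → ℝ≥0∞) (y m) ≤ 1 := fun i =>
    prod_le_one' fun m _ => Set.indicator_apply_le' (fun _ => le_rfl) fun _ => zero_le_one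
  simpa [cylinderCount] using sum_le_card_nsmul univ _ 1 fun i _ => hle i

theorem cylinderCount_update [DecidableEq ι] (B : Fin N → ι → Set α) {A : Finset ι} {m₀ : ι}
    (hm₀ : m₀ ∉ A) (y : ι → α) (t : α) : cylinderCount B A (update y m₀ t) = cylinderCount B A y :=
  sum_congr rfl fun i _ => prod_congr rfl fun m hm => by
    rw [update_of_ne (ne_of_mem_of_not_mem hm hm₀)]

theorem lmarginal_cylinderCount_le [MeasurableSpace α] [DecidableEq ι] (μ : Measure α)
    [SigmaFinite μ] {B : Fin N → ι → Set α} (hB : ∀ i m, MeasurableSet (B i m)) {a : ℝ≥0∞}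
    (hBa : ∀ i m, μ (B i m) ≤ a) {A T : Finset ι} (hTA : T ⊆ A) (x : ι → α) :
    (∫⋯∫⁻_T, cylinderCount B A ∂fun _ => μ) x ≤ a ^ #T * cylinderCount B (A \ T) x := by
  have hind : ∀ i m, Measurable ((B i m).indicator (1 : α → ℝ≥0∞)) :=
    fun i m => measurable_one.indicator (hB i m)
  have hprod : ∀ i, Measurable fun y : ι → α => ∏ m ∈ A, (B i m).indicator 1 (y m) :=
    fun i => Finset.measurable_prod _ fun m _ => (hind i m).comp (measurable_pi_apply m)
  unfold cylinderCount
  rw [lmarginal_finset_sum _ _ _ fun i _ => hprod i, Finset.sum_apply, mul_sum]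
  refine sum_le_sum fun i _ => ?_
  rw [lmarginal_prod_comp_eval _ hTA (hind i) x]
  gcongr
  exact prod_le_pow_card _ _ _ fun m _ => (lintegral_indicator_one_le _).trans (hBa i m)

end Cylinders

section AxisParallel

variable {α : Type*} [MeasurableSpace α] (μ : Measure α) [SigmaFinite μ]
  {ι : Type*} [DecidableEq ι] {k : ℕ} {N : Fin k → ℕ} {B : (j : Fin k) → Fin (N j) → ι → Set α}
  {a : ℝ≥0∞}

theorem lmarginal_image_prod_rpow_cylinderCount_le [Fintype ι] (hk : 2 ≤ k) {e : Fin k → ι}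
    (he : Injective e) (hB : ∀ j i m, MeasurableSet (B j i m)) (hBa : ∀ j i m, μ (B j i m) ≤ a)
    (x : ι → α) :
    (∫⋯∫⁻_(univ.image e), (fun y => ∏ j, cylinderCount (B j) (univ.erase (e j)) y ^
        (1 / ((k : ℝ) - 1))) ∂fun _ => μ) x ≤
      a ^ k * ∏ j, cylinderCount (B j) (univ.image e)ᶜ x ^ (1 / ((k : ℝ) - 1)) := by
  set S : Finset ι := univ.image e
  have hSk : #S = k := by rw [card_image_of_injective _ he, card_univ, Fintype.card_fin]
  have hp := one_div_natCast_sub_one_nonneg (by omega : 1 ≤ k)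
  have hpk : 1 / ((k : ℝ) - 1) = ((k - 1 : ℕ) : ℝ)⁻¹ := by
    rw [Nat.cast_sub (by omega : 1 ≤ k), Nat.cast_one, one_div]
  calc _ ≤ ∏ j, (∫⋯∫⁻_(S.erase (e j)), cylinderCount (B j) (univ.erase (e j)) ∂fun _ => μ) x ^
          (1 / ((k : ℝ) - 1)) :=
        lmarginal_prod_rpow_le _ hk he (fun j => measurable_cylinderCount (hB j) _)
          (fun j => cylinderCount_update _ (notMem_erase _ _)) (by simp [S]) x
    _ ≤ ∏ j, (a ^ (k - 1) * cylinderCount (B j) Sᶜ x) ^ (1 / ((k : ℝ) - 1)) := by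
        gcongr with j
        have hsdiff : univ.erase (e j) \ S.erase (e j) = Sᶜ := by
          ext m; by_cases hm : m = e j <;> simp [S, hm]
        have := lmarginal_cylinderCount_le μ (hB j) (hBa j)
          (erase_subset_erase (e j) (subset_univ S)) x
        rwa [hsdiff, card_erase_of_mem (by simp [S]), hSk] at this
    _ = _ := by
        simp_rw [ENNReal.mul_rpow_of_nonneg _ _ hp, prod_mul_distrib, prod_const, card_univ,
          Fintype.card_fin]
        rw [hpk, ENNReal.pow_rpow_inv_natCast (by omega)]

theorem lmarginal_prod_rpow_cylinderCount_le (hk : 2 ≤ k) (hB : ∀ j i m, MeasurableSet (B j i m))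
    (hBa : ∀ j i m, μ (B j i m) ≤ a) (A : Finset ι) (x : ι → α) :
    (∫⋯∫⁻_A, (fun y => ∏ j, cylinderCount (B j) A y ^ (1 / ((k : ℝ) - 1))) ∂fun _ => μ) x ≤
      a ^ #A * ∏ j, (N j : ℝ≥0∞) ^ (1 / ((k : ℝ) - 1)) :=
  lintegral_prod_rpow_le_of_le hk
    (fun j => (measurable_cylinderCount (hB j) A).comp measurable_updateFinset)
    (fun j y => cylinderCount_le _ _ _) fun j => by
      have := lmarginal_cylinderCount_le μ (hB j) (hBa j) (subset_refl A) x
      rw [sdiff_self] at this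
      exact this.trans_eq (by simp [cylinderCount, mul_comm])

/-- The axis-parallel case of `multilinear_kakeya_parallel`. -/
theorem lintegral_prod_rpow_cylinderCount_le [Fintype ι] (hk : 2 ≤ k) {e : Fin k → ι}
    (he : Injective e) (hB : ∀ j i m, MeasurableSet (B j i m)) (hBa : ∀ j i m, μ (B j i m) ≤ a) :
    ∫⁻ x, ∏ j, cylinderCount (B j) (univ.erase (e j)) x ^ (1 / ((k : ℝ) - 1))
        ∂Measure.pi (fun _ => μ) ≤
      a ^ Fintype.card ι * ∏ j, (N j : ℝ≥0∞) ^ (1 / ((k : ℝ) - 1)) := by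
  set S : Finset ι := univ.image e
  have hF : Measurable fun y => ∏ j, cylinderCount (B j) (univ.erase (e j)) y ^
      (1 / ((k : ℝ) - 1)) :=
    Finset.measurable_prod _ fun j _ => (measurable_cylinderCount (hB j) _).pow_const _
  have hG : Measurable fun y => ∏ j, cylinderCount (B j) Sᶜ y ^ (1 / ((k : ℝ) - 1)) :=
    Finset.measurable_prod _ fun j _ => (measurable_cylinderCount (hB j) _).pow_const _
  rcases isEmpty_or_nonempty (ι → α) with hα | ⟨⟨x⟩⟩
  · simp [lintegral_of_isEmpty]
  calc _ = (∫⋯∫⁻_Sᶜ, ∫⋯∫⁻_S, (fun y => ∏ j, cylinderCount (B j) (univ.erase (e j)) y ^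
          (1 / ((k : ℝ) - 1))) ∂fun _ => μ ∂fun _ => μ) x := by
        rw [← lmarginal_union _ _ hF disjoint_compl_left, union_comm, union_compl,
          ← lintegral_eq_lmarginal_univ]
    _ ≤ (∫⋯∫⁻_Sᶜ, (fun y => a ^ k * ∏ j, cylinderCount (B j) Sᶜ y ^ (1 / ((k : ℝ) - 1)))
          ∂fun _ => μ) x :=
        lmarginal_mono (lmarginal_image_prod_rpow_cylinderCount_le μ hk he hB hBa) x
    _ = a ^ k * (∫⋯∫⁻_Sᶜ, (fun y => ∏ j, cylinderCount (B j) Sᶜ y ^ (1 / ((k : ℝ) - 1)))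
          ∂fun _ => μ) x :=
        lintegral_const_mul _ (hG.comp measurable_updateFinset)
    _ ≤ _ := by
        have hSk : #S = k := by rw [card_image_of_injective _ he, card_univ, Fintype.card_fin]
        grw [lmarginal_prod_rpow_cylinderCount_le μ hk hB hBa, ← mul_assoc, ← pow_add,
          card_compl, hSk, Nat.add_sub_cancel' (by simpa [hSk] using card_le_univ S)]

end AxisParallel

theorem lintegral_comp_linearMap {E : Type*} [NormedAddCommGroup E] [NormedSpace ℝ E]
    [MeasurableSpace E] [BorelSpace E] [FiniteDimensional ℝ E] (μ : Measure E)
    [μ.IsAddHaarMeasure] {f : E →ₗ[ℝ] E} (hf : LinearMap.det f ≠ 0) {g : E → ℝ≥0∞}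
    (hg : Measurable g) :
    ∫⁻ x, g (f x) ∂μ = ENNReal.ofReal |(LinearMap.det f)⁻¹| * ∫⁻ x, g x ∂μ := by
  rw [← lintegral_map hg f.continuous_of_finiteDimensional.measurable,
    Measure.map_linearMap_addHaar_eq_smul_addHaar μ hf, lintegral_smul_measure, smul_eq_mul]

section RealCoordinates

open Matrix

variable {n : ℕ}

def irlEquiv (n : ℕ) : (Fin n → ℂ) ≃ₗ[ℝ] (Fin n × Fin 2 → ℝ) where
  toFun := Irl
  invFun y m := ⟨y (m, 0), y (m, 1)⟩
  map_add' x y := by ext ⟨m, ε⟩; fin_cases ε <;> simp [Irl]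
  map_smul' r x := by ext ⟨m, ε⟩; fin_cases ε <;> simp [Irl]
  left_inv x := by ext m; simp [Irl]
  right_inv y := by ext ⟨m, ε⟩; fin_cases ε <;> simp [Irl]

def realMatrixToLin (A : Matrix (Fin n × Fin 2) (Fin n × Fin 2) ℝ) :
    (Fin n → ℂ) →ₗ[ℝ] (Fin n → ℂ) :=
  (irlEquiv n).symm.toLinearMap ∘ₗ Matrix.toLin' A ∘ₗ (irlEquiv n).toLinearMap

theorem irl_realMatrixToLin (A : Matrix (Fin n × Fin 2) (Fin n × Fin 2) ℝ) (w : Fin n → ℂ) :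
    Irl (realMatrixToLin A w) = A *ᵥ Irl w :=
  (irlEquiv n).apply_symm_apply _

theorem det_realMatrixToLin (A : Matrix (Fin n × Fin 2) (Fin n × Fin 2) ℝ) :
    LinearMap.det (realMatrixToLin A) = A.det :=
  (LinearMap.det_conj (Matrix.toLin' A) (irlEquiv n).symm).trans (LinearMap.det_toLin' A)

theorem realMatrixToLin_apply_eq_zero {A : Matrix (Fin n × Fin 2) (Fin n × Fin 2) ℝ}
    {u : Fin n → ℂ} {m₀ : Fin n} {ε : Fin 2} (h : A *ᵥ Irl u = Pi.single (m₀, ε) 1) {m : Fin n}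
    (hm : m ≠ m₀) : realMatrixToLin A u m = 0 := by
  have hcoord : ∀ ε', Irl (realMatrixToLin A u) (m, ε') = 0 := fun ε' => by
    rw [irl_realMatrixToLin, h, Pi.single_apply, if_neg fun h' => hm (Prod.ext_iff.1 h').1]
  apply Complex.ext
  · simpa [Irl] using hcoord 0
  · simpa [Irl] using hcoord 1

end RealCoordinates

open Matrix in
theorem exists_matrix_of_lt_wedgeAbs {n k : ℕ} (hkn : k ≤ n) {v : Fin k → Fin n → ℂ} {c : ℝ}
    (hc : 0 < c) (hwedge : c < wedgeAbs v) :
    ∃ M : Matrix (Fin n × Fin 2) (Fin n × Fin 2) ℝ, IsUnit M.det ∧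
      ∀ j, M *ᵥ Pi.single (Fin.castLE hkn j, 0) 1 = Irl (v j) ∧
        M *ᵥ Pi.single (Fin.castLE hkn j, 1) 1 = Irl (Complex.I • v j) := by
  obtain ⟨D, ⟨u, -, -, rfl⟩, hcD⟩ : ∃ D ∈ wedgeSet v, c < D := by
    by_contra! h
    exact hwedge.not_ge (Real.sSup_le h hc.le)
  refine ⟨_, isUnit_iff_ne_zero.2 (abs_pos.1 (hc.trans hcD)), fun j => ⟨?_, ?_⟩⟩ <;>
    ext r <;> simp [Fin.castLE]

open Matrix in
theorem exists_straightening_of_lt_wedgeAbs {n k : ℕ} (hkn : k ≤ n) {v : Fin k → Fin n → ℂ}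
    {c : ℝ} (hc : 0 < c) (hwedge : c < wedgeAbs v) :
    ∃ φ : (Fin n → ℂ) →ₗ[ℝ] (Fin n → ℂ), LinearMap.det φ ≠ 0 ∧
      ∀ j, ∀ m ≠ Fin.castLE hkn j, φ (v j) m = 0 ∧ φ (Complex.I • v j) m = 0 := by
  obtain ⟨M, hM, hMv⟩ := exists_matrix_of_lt_wedgeAbs hkn hc hwedge
  refine ⟨realMatrixToLin M⁻¹, ?_, fun j m hm => ⟨realMatrixToLin_apply_eq_zero (ε := 0) ?_ hm,
    realMatrixToLin_apply_eq_zero (ε := 1) ?_ hm⟩⟩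
  · rw [det_realMatrixToLin, det_nonsing_inv, Ring.inverse_eq_inv']
    exact inv_ne_zero hM.ne_zero
  · rw [← (hMv j).1, mulVec_mulVec, nonsing_inv_mul _ hM, one_mulVec]
  · rw [← (hMv j).2, mulVec_mulVec, nonsing_inv_mul _ hM, one_mulVec]

theorem norm_le_cnorm {n : ℕ} (w : Fin n → ℂ) : ‖w‖ ≤ cnorm w :=
  (pi_norm_le_iff_of_nonneg (Real.sqrt_nonneg _)).2 fun m => Real.le_sqrt_of_sq_le <|
    single_le_sum (f := fun m => ‖w m‖ ^ 2) (fun _ _ => sq_nonneg _) (mem_univ m)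

section Tubes

variable {n : ℕ} {φ : (Fin n → ℂ) →ₗ[ℝ] (Fin n → ℂ)} {v : Fin n → ℂ} {m₀ : Fin n}

theorem apply_mem_closedBall_of_mem_tube {a : Fin n → ℂ} {K : ℝ} (hK0 : 0 ≤ K)
    (hK : ∀ w, ‖φ w‖ ≤ K * ‖w‖) (hv : ∀ m ≠ m₀, φ v m = 0 ∧ φ (Complex.I • v) m = 0) {δ : ℝ}
    {x : Fin n → ℂ} (hx : x ∈ tube a v δ) {m : Fin n} (hm : m ≠ m₀) :
    φ x m ∈ Metric.closedBall (φ a m) (K * δ) := by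
  obtain ⟨z, hz⟩ := hx
  set w : Fin n → ℂ := fun j => x j - (a j + z * v j)
  have hx : x = a + (z.re • v + z.im • (Complex.I • v)) + w := by
    ext j
    simp only [w, Pi.add_apply, Pi.smul_apply, Complex.real_smul, smul_eq_mul]
    linear_combination -v j * Complex.re_add_im z
  rw [Metric.mem_closedBall, dist_eq_norm, hx]
  simp only [map_add, map_smul, Pi.add_apply, Pi.smul_apply, (hv m hm).1, (hv m hm).2,
    smul_zero, add_zero, add_sub_cancel_left]
  calc ‖φ w m‖ ≤ ‖φ w‖ := norm_le_pi_norm _ m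
    _ ≤ K * ‖w‖ := hK w
    _ ≤ K * δ := by gcongr; exact (norm_le_cnorm w).trans hz.le

theorem sum_indicator_tube_le_cylinderCount {K : ℝ} (hK0 : 0 ≤ K) (hK : ∀ w, ‖φ w‖ ≤ K * ‖w‖)
    (hv : ∀ m ≠ m₀, φ v m = 0 ∧ φ (Complex.I • v) m = 0) {N : ℕ} (a : Fin N → Fin n → ℂ)
    (δ : ℝ) (x : Fin n → ℂ) :
    ∑ i, (tube (a i) v δ).indicator (1 : (Fin n → ℂ) → ℝ≥0∞) x ≤
      cylinderCount (fun i m => Metric.closedBall (φ (a i) m) (K * δ)) (univ.erase m₀) (φ x) := by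
  refine sum_le_sum fun i _ => ?_
  by_cases hx : x ∈ tube (a i) v δ
  · rw [Set.indicator_of_mem hx, prod_eq_one fun m hm => Set.indicator_of_mem
      (apply_mem_closedBall_of_mem_tube hK0 hK hv hx (ne_of_mem_erase hm)) _]
    rfl
  · simp [Set.indicator_of_notMem hx]

end Tubes

theorem multilinear_kakeya_parallel_general {n k : ℕ}
    (hk2 : 2 ≤ k) (hkn : k ≤ n) (c : ℝ) (hc : 0 < c)
    (v : Fin k → (Fin n → ℂ))
    (hwedge : c < wedgeAbs v) :
    ∃ C : ℝ, 0 < C ∧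
      ∀ δ : ℝ, 0 < δ →
      ∀ N : Fin k → ℕ,
      ∀ a : (j : Fin k) → Fin (N j) → (Fin n → ℂ),
        (∫⁻ w, ∏ j, (∑ i, (tube (a j i) (v j) δ).indicator
              (fun _ => (1 : ENNReal)) w) ^ (1 / ((k : ℝ) - 1))) ≤
          ENNReal.ofReal (C * δ ^ (2 * n)) *
            ∏ j, (N j : ENNReal) ^ (1 / ((k : ℝ) - 1)) := by
  obtain ⟨φ, hdet, hφv⟩ := exists_straightening_of_lt_wedgeAbs hkn hc hwedge
  obtain ⟨K, hK0, hK⟩ := (LinearMap.toContinuousLinearMap φ).bound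
  refine ⟨|(LinearMap.det φ)⁻¹| * (K ^ 2 * Real.pi) ^ n,
    mul_pos (abs_pos.2 (inv_ne_zero hdet)) (by positivity), fun δ hδ N a => ?_⟩
  set G : (Fin n → ℂ) → ℝ≥0∞ := fun y => ∏ j, cylinderCount
    (fun i m => Metric.closedBall (φ (a j i) m) (K * δ)) (univ.erase (Fin.castLE hkn j)) y ^
      (1 / ((k : ℝ) - 1))
  have hG : Measurable G := Finset.measurable_prod _ fun j _ =>
    (measurable_cylinderCount (fun _ _ => measurableSet_closedBall) _).pow_const _
  calc _ ≤ ∫⁻ x, G (φ x) := lintegral_mono fun x => prod_le_prod' fun j _ =>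
        ENNReal.rpow_le_rpow (sum_indicator_tube_le_cylinderCount hK0.le hK (hφv j) (a j) δ x)
          (one_div_natCast_sub_one_nonneg (by omega))
    _ = ENNReal.ofReal |(LinearMap.det φ)⁻¹| * ∫⁻ y, G y := lintegral_comp_linearMap _ hdet hG
    _ ≤ ENNReal.ofReal |(LinearMap.det φ)⁻¹| * ((ENNReal.ofReal (K * δ) ^ 2 * NNReal.pi) ^ n *
          ∏ j, (N j : ℝ≥0∞) ^ (1 / ((k : ℝ) - 1))) := by
        gcongr
        have := lintegral_prod_rpow_cylinderCount_le volume hk2 (Fin.castLE_injective hkn)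
          (B := fun j i m => Metric.closedBall (φ (a j i) m) (K * δ))
          (fun _ _ _ => measurableSet_closedBall) fun _ _ _ => (Complex.volume_closedBall _ _).le
        rwa [Fintype.card_fin] at this
    _ = _ := by
        rw [← mul_assoc, ← ENNReal.ofReal_pow (by positivity), ← ENNReal.ofReal_coe_nnreal,
          NNReal.coe_real_pi, ← ENNReal.ofReal_mul (by positivity),
          ← ENNReal.ofReal_pow (by positivity), ← ENNReal.ofReal_mul (abs_nonneg _)]
        congr 2
        ring

/-- Lemma 3.8 of the paper (the case `ν = 0`): if `|v_1 ∧ ⋯ ∧ v_k| > c` for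
unit vectors `v_j ∈ ℂ^n` and each member of the `j`-th family is the
`δ`-neighborhood of an affine complex line with direction exactly `v_j`, then
`∫ ∏_j (∑ χ_{U_{i,j}})^{1/(k−1)} ≤ C δ^{2n} ∏_j (#𝕌_j)^{1/(k−1)}`. -/
theorem multilinear_kakeya_parallel {n k : ℕ}
    (hn : 2 ≤ n) (hk2 : 2 ≤ k) (hkn : k ≤ n) (c : ℝ) (hc : 0 < c)
    (v : Fin k → (Fin n → ℂ)) (hv : ∀ j, cnorm (v j) = 1)
    (hwedge : c < wedgeAbs v) :
    ∃ C : ℝ, 0 < C ∧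
      ∀ δ : ℝ, 0 < δ →
      ∀ N : Fin k → ℕ,
      ∀ a : (j : Fin k) → Fin (N j) → (Fin n → ℂ),
        (∫⁻ w, ∏ j, (∑ i, (tube (a j i) (v j) δ).indicator
              (fun _ => (1 : ENNReal)) w) ^ (1 / ((k : ℝ) - 1))) ≤
          ENNReal.ofReal (C * δ ^ (2 * n)) *
            ∏ j, (N j : ENNReal) ^ (1 / ((k : ℝ) - 1)) :=
  multilinear_kakeya_parallel_general hk2 hkn c hc v hwedge

end
end
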